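/- arXiv:2511.10599 — 3 statements merged into one kernel-verified Lean document; each statement's English description precedes it below -/
import Mathlib

section
/- Let P_r be the radial projection on ℝ^d given by P_r(x) = ξ(‖x‖)x with ξ(ρ) = 1 for ρ ≤ (1-δ)r, ξ(ρ) = 1 - ψ((ρ-(1-δ)r)/(δr)) for (1-δ)r < ρ < r, and ξ(ρ) = 0 for ρ ≥ r, where ψ is the symmetric Beta(d+1,d+1) CDF. Then each component of P_r is d times continuously differentiable on ℝ^d (in particular, all mixed partial derivatives of order ≤ d exist everywhere). -/
open intervalIntegral

lemma hasDerivAt_maxpow (m : ℕ) (hm : 1 ≤ m) (x : ℝ) :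
    HasDerivAt (fun y : ℝ => max y 0 ^ (m+1)) ((m+1) * max x 0 ^ m) x := by
  rcases lt_trichotomy x 0 with hx | hx | hx
  · have h0 : ((m:ℝ)+1) * max x 0 ^ m = 0 := by
      rw [max_eq_right hx.le, zero_pow (by omega : m ≠ 0), mul_zero]
    rw [h0]
    refine (hasDerivAt_const x (0:ℝ)).congr_of_eventuallyEq ?_
    filter_upwards [Iio_mem_nhds hx] with y hy
    rw [max_eq_right (le_of_lt hy), zero_pow (by omega : m+1 ≠ 0)]
  · subst hx
    have h0 : ((m:ℝ)+1) * max 0 0 ^ m = 0 := by simp [zero_pow (by omega : m ≠ 0)]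
    rw [h0, hasDerivAt_iff_isLittleO]
    simp only [sub_zero, zero_pow (by omega : m+1 ≠ 0), max_self, smul_zero, sub_zero]
    have h1 : (fun y : ℝ => y ^ m) =o[nhds 0] (fun _ => (1:ℝ)) := by
      rw [Asymptotics.isLittleO_one_iff]
      simpa [zero_pow (by omega : m ≠ 0)] using (continuous_pow m).tendsto (0:ℝ)
    have h2 : (fun y : ℝ => y ^ m * y) =o[nhds 0] (fun y => 1 * y) :=
      h1.mul_isBigO (Asymptotics.isBigO_refl _ _)
    have h3 : (fun y : ℝ => y ^ (m+1)) =o[nhds 0] (fun y => y) := by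
      simpa [pow_succ] using h2
    refine Asymptotics.IsBigO.trans_isLittleO ?_ h3
    refine Asymptotics.isBigO_of_le _ (fun y => ?_)
    simp only [norm_pow, Real.norm_eq_abs]
    refine pow_le_pow_left₀ (abs_nonneg _) ?_ _
    rcases le_or_gt y 0 with h | h
    · rw [max_eq_right h]; simp
    · rw [max_eq_left h.le]
  · have h := hasDerivAt_pow (m+1) x
    rw [max_eq_left hx.le]
    refine HasDerivAt.congr_of_eventuallyEq (by simpa using h) ?_
    filter_upwards [Ioi_mem_nhds hx] with y hy
    rw [max_eq_left (le_of_lt hy)]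

lemma contDiff_maxpow : ∀ m : ℕ, ContDiff ℝ (m : ℕ∞) (fun x : ℝ => max x 0 ^ (m+1)) := by
  intro m
  induction m with
  | zero =>
      suffices h : ContDiff ℝ 0 (fun x : ℝ => max x 0 ^ (0+1)) by exact_mod_cast h
      rw [contDiff_zero]
      simpa using (continuous_id.max continuous_const)
  | succ n ih =>
      suffices h : ContDiff ℝ ((n : WithTop ℕ∞) + 1) (fun x : ℝ => max x 0 ^ (n+1+1)) by
        exact_mod_cast h
      rw [contDiff_succ_iff_deriv]
      refine ⟨fun x => (hasDerivAt_maxpow (n+1) (by omega) x).differentiableAt, ?_, ?_⟩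
      · intro h; exact absurd h (by simp)
      · have hderiv : deriv (fun y : ℝ => max y 0 ^ (n+1+1)) =
            fun x => ((n:ℝ)+1+1) * max x 0 ^ (n+1) := by
          funext x
          have := (hasDerivAt_maxpow (n+1) (by omega) x).deriv
          rw [this]; push_cast; ring
        rw [hderiv]
        exact contDiff_const.mul ih

lemma contDiff_primitive {f : ℝ → ℝ} {n : ℕ} (hf : ContDiff ℝ (n : ℕ∞) f) (a : ℝ) :
    ContDiff ℝ ((n:ℕ∞) + 1) (fun x => ∫ t in a..x, f t) := by
  suffices h : ContDiff ℝ ((n : WithTop ℕ∞) + 1) (fun x => ∫ t in a..x, f t) by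
    exact_mod_cast h
  have hc : Continuous f := hf.continuous
  have hd : ∀ x : ℝ, HasDerivAt (fun u => ∫ t in a..u, f t) (f x) x := fun x =>
    intervalIntegral.integral_hasDerivAt_right (hc.intervalIntegrable _ _)
      (hc.stronglyMeasurableAtFilter _ _) hc.continuousAt
  rw [contDiff_succ_iff_deriv]
  refine ⟨fun x => (hd x).differentiableAt, ?_, ?_⟩
  · intro h; exact absurd h (by simp)
  · have : deriv (fun u => ∫ t in a..u, f t) = f := funext fun x => (hd x).deriv
    rw [this]; exact hf

noncomputable def psi (d : ℕ) (t : ℝ) : ℝ :=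
  (∫ s in (0:ℝ)..t, s ^ d * (1 - s) ^ d) / (∫ s in (0:ℝ)..1, s ^ d * (1 - s) ^ d)

noncomputable def proj (d : ℕ) (δ r : ℝ) (x : EuclideanSpace ℝ (Fin d)) :
    EuclideanSpace ℝ (Fin d) :=
  if ‖x‖ ≤ (1 - δ) * r then x
  else if ‖x‖ < r then (1 - psi d ((‖x‖ - (1 - δ) * r) / (δ * r))) • x
  else 0

theorem proj_contDiff (d : ℕ) (hd : 0 < d) (δ r : ℝ)
    (hδ1 : 0 < δ) (hδ2 : δ < 1/2) (hr : 1 < (1 - δ) * r) :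
    ∀ i : Fin d, ContDiff ℝ (d : ℕ∞) (fun x : EuclideanSpace ℝ (Fin d) => proj d δ r x i) := by
  -- basic positivity facts
  have hδ' : 0 < 1 - δ := by linarith
  have hr0 : 0 < r := by nlinarith
  set a : ℝ := (1 - δ) * r with ha
  set c : ℝ := δ * r with hc
  have hc0 : 0 < c := mul_pos hδ1 hr0
  have ha1 : 1 < a := hr
  have har : a + c = r := by rw [ha, hc]; ring
  have halt : a < r := by rw [← har]; linarith
  -- the bump integrand
  set H : ℝ → ℝ := fun s => max (s * (1 - s)) 0 ^ d with hH
  have hHeq : ∀ s ∈ Set.Icc (0:ℝ) 1, H s = s ^ d * (1 - s) ^ d := by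
    intro s hs
    rw [hH]
    simp only
    rw [max_eq_left (mul_nonneg hs.1 (by linarith [hs.2])), mul_pow]
  have hH0 : ∀ s : ℝ, s ≤ 0 → H s = 0 := by
    intro s hs
    rw [hH]; simp only
    rw [max_eq_right (mul_nonpos_of_nonpos_of_nonneg hs (by linarith)),
      zero_pow (by omega : d ≠ 0)]
  have hH1 : ∀ s : ℝ, 1 ≤ s → H s = 0 := by
    intro s hs
    rw [hH]; simp only
    rw [max_eq_right (mul_nonpos_of_nonneg_of_nonpos (by linarith) (by linarith)),
      zero_pow (by omega : d ≠ 0)]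
  -- H is C^{d-1}
  have hHsmooth : ContDiff ℝ ((d - 1 : ℕ) : ℕ∞) H := by
    have h1 : ContDiff ℝ ((d-1 : ℕ) : ℕ∞) (fun x : ℝ => max x 0 ^ ((d-1)+1)) :=
      contDiff_maxpow (d-1)
    have h2 : ContDiff ℝ ((d-1 : ℕ) : ℕ∞) (fun s : ℝ => s * (1 - s)) :=
      contDiff_id.mul (contDiff_const.sub contDiff_id)
    have := h1.comp h2
    rw [Nat.sub_add_cancel hd] at this
    simpa [hH, Function.comp_def] using this
  -- normalization constant
  set C : ℝ := ∫ s in (0:ℝ)..1, s ^ d * (1 - s) ^ d with hC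
  have hCpos : 0 < C := by
    rw [hC]
    refine intervalIntegral.intervalIntegral_pos_of_pos_on ?_ ?_ one_pos
    · exact (Continuous.intervalIntegrable ((continuous_pow d).mul ((continuous_const.sub continuous_id).pow d)) _ _)
    · intro s hs
      exact mul_pos (pow_pos hs.1 d) (pow_pos (by linarith [hs.2]) d)
  -- the radial profile
  set g : ℝ → ℝ := fun ρ => 1 - (∫ t in a..ρ, H ((t - a) / c)) / (c * C) with hg
  have hHcont : Continuous H := hHsmooth.continuous
  have hIntegrand : Continuous (fun t : ℝ => H ((t - a) / c)) :=
    hHcont.comp ((continuous_id.sub continuous_const).div_const c)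
  -- substitution
  have hsub : ∀ ρ : ℝ, (∫ t in a..ρ, H ((t - a) / c)) = c * ∫ s in (0:ℝ)..(ρ - a)/c, H s := by
    intro ρ
    have h1 : (∫ t in a..ρ, H ((t - a) / c)) = ∫ u in (a - a)..(ρ - a), H (u / c) :=
      intervalIntegral.integral_comp_sub_right (fun u => H (u / c)) a
    rw [h1, sub_self]
    have h2 := intervalIntegral.integral_comp_div (a := (0:ℝ)) (b := ρ - a) H (ne_of_gt hc0)
    rw [h2, zero_div, smul_eq_mul]
  -- g = 1 left of a
  have hg1 : ∀ ρ : ℝ, ρ ≤ a → g ρ = 1 := by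
    intro ρ hρ
    rw [hg]
    simp only
    have hz : (∫ t in a..ρ, H ((t - a) / c)) = 0 := by
      rw [hsub]
      have : (∫ s in (0:ℝ)..(ρ - a)/c, H s) = ∫ s in (0:ℝ)..(ρ - a)/c, (0:ℝ) := by
        refine intervalIntegral.integral_congr (fun s hs => ?_)
        have h1 : (ρ - a)/c ≤ 0 := div_nonpos_of_nonpos_of_nonneg (by linarith) hc0.le
        have h2 : s ≤ 0 := by
          rcases Set.mem_uIcc.1 hs with h | h
          · linarith [h.2]
          · linarith [h.2]
        exact hH0 s h2
      rw [this, intervalIntegral.integral_zero, mul_zero]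
    rw [hz, zero_div, sub_zero]
  -- g = 1 - psi in the middle
  have hg2 : ∀ ρ : ℝ, a ≤ ρ → ρ ≤ r → g ρ = 1 - psi d ((ρ - a) / c) := by
    intro ρ h1 h2
    have hu0 : 0 ≤ (ρ - a)/c := div_nonneg (by linarith) hc0.le
    have hu1 : (ρ - a)/c ≤ 1 := by
      rw [div_le_one hc0]; linarith
    have hcongr : (∫ s in (0:ℝ)..(ρ - a)/c, H s)
        = ∫ s in (0:ℝ)..(ρ - a)/c, s ^ d * (1 - s) ^ d := by
      refine intervalIntegral.integral_congr (fun s hs => ?_)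
      refine hHeq s ?_
      rcases Set.mem_uIcc.1 hs with h | h
      · exact ⟨h.1, le_trans h.2 hu1⟩
      · exact ⟨le_trans hu0 h.1, h.2.trans zero_le_one⟩
    rw [hg]
    simp only
    rw [hsub, hcongr, psi, ← hC]
    congr 1
    rw [mul_div_mul_left _ _ (ne_of_gt hc0)]
  -- g = 0 right of r
  have hg3 : ∀ ρ : ℝ, r ≤ ρ → g ρ = 0 := by
    intro ρ hρ
    have hsplit : (∫ t in a..ρ, H ((t - a) / c))
        = (∫ t in a..r, H ((t - a) / c)) + ∫ t in r..ρ, H ((t - a) / c) :=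
      (intervalIntegral.integral_add_adjacent_intervals
        (hIntegrand.intervalIntegrable _ _) (hIntegrand.intervalIntegrable _ _)).symm
    have hz : (∫ t in r..ρ, H ((t - a) / c)) = 0 := by
      have : (∫ t in r..ρ, H ((t - a) / c)) = ∫ t in r..ρ, (0:ℝ) := by
        refine intervalIntegral.integral_congr (fun t ht => ?_)
        have htr : r ≤ t := by
          rcases Set.mem_uIcc.1 ht with h | h
          · exact h.1
          · linarith [h.1, h.2]
        refine hH1 _ ?_
        rw [le_div_iff₀ hc0, one_mul]
        linarith [har]
      rw [this, intervalIntegral.integral_zero]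
    have hfull : (∫ t in a..r, H ((t - a) / c)) = c * C := by
      rw [hsub]
      have hu : (r - a)/c = 1 := by
        field_simp
        linarith [har]
      rw [hu]
      congr 1
      rw [hC]
      refine intervalIntegral.integral_congr (fun s hs => ?_)
      refine hHeq s ?_
      rcases Set.mem_uIcc.1 hs with h | h
      · exact ⟨h.1, h.2⟩
      · exact ⟨le_trans zero_le_one h.1, h.2.trans zero_le_one⟩
    rw [hg]
    simp only
    rw [hsplit, hz, hfull, add_zero, div_self (by positivity), sub_self]
  -- g is C^d
  have hgsmooth : ContDiff ℝ (d : ℕ∞) g := by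
    have hcomp : ContDiff ℝ ((d - 1 : ℕ) : ℕ∞) (fun t : ℝ => H ((t - a) / c)) :=
      hHsmooth.comp ((contDiff_id.sub contDiff_const).div_const c)
    have hprim := contDiff_primitive hcomp a
    have hprim' : ContDiff ℝ (d : ℕ∞) (fun x => ∫ t in a..x, H ((t - a) / c)) := by
      have hd' : d - 1 + 1 = d := Nat.sub_add_cancel hd
      rw [← hd']
      exact_mod_cast hprim
    rw [hg]
    exact contDiff_const.sub (hprim'.div_const _)
  -- the global map
  have hF : ContDiff ℝ (d : ℕ∞) (fun x : EuclideanSpace ℝ (Fin d) => g ‖x‖ • x) := by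
    rw [contDiff_iff_contDiffAt]
    intro x
    rcases lt_or_ge ‖x‖ a with hx | hx
    · refine ContDiffAt.congr_of_eventuallyEq contDiffAt_id ?_
      have hopen : IsOpen {y : EuclideanSpace ℝ (Fin d) | ‖y‖ < a} :=
        isOpen_lt continuous_norm continuous_const
      filter_upwards [hopen.mem_nhds hx] with y hy
      simp [hg1 _ (le_of_lt hy)]
    · have hx0 : x ≠ 0 := by
        intro h
        rw [h, norm_zero] at hx
        linarith
      exact ((hgsmooth.contDiffAt).comp x (contDiffAt_norm ℝ hx0)).smul contDiffAt_id
  -- proj equals the global map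
  have hproj : (proj d δ r) = (fun x : EuclideanSpace ℝ (Fin d) => g ‖x‖ • x) := by
    funext x
    rw [proj]
    split_ifs with h1 h2
    · rw [hg1 _ h1, one_smul]
    · rw [hg2 _ (le_of_not_ge h1) (le_of_lt h2)]
    · rw [hg3 _ (le_of_not_gt h2), zero_smul]
  intro i
  have : (fun x : EuclideanSpace ℝ (Fin d) => proj d δ r x i)
      = fun x => EuclideanSpace.proj i (g ‖x‖ • x) := by
    funext x
    rw [hproj]
    rfl
  rw [this]
  exact (EuclideanSpace.proj i).contDiff.comp hF
end

section
/- Let P_r be the radial projection on ℝ^d (P_r(x) = x for ‖x‖ ≤ (1-δ)r, P_r(x) = (1-ψ(t(x)))x on the shell, P_r(x) = 0 for ‖x‖ ≥ r). Then for every nonempty v ⊆ {1,…,d} and every component index i, there is a constant c independent of r such that |∂^v P_r^{(i)}(x)| ≤ c · 1{‖x‖ < r} for all x ∈ ℝ^d. -/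
/-- The mixed partial derivative `∂^v f`, differentiating once in each coordinate of `v`,
encoded via the iterated Fréchet derivative applied to standard basis vectors. -/
noncomputable def mixedPartial (d : ℕ) (f : EuclideanSpace ℝ (Fin d) → ℝ)
    (v : Finset (Fin d)) (x : EuclideanSpace ℝ (Fin d)) : ℝ :=
  iteratedFDeriv ℝ v.card f x
    (fun k => EuclideanSpace.single ((v.orderIsoOfFin rfl k : Fin d)) (1 : ℝ))

/-!
Rescaling gives `P_r x = r • P_1 (r⁻¹ • x)`, hence
`‖D^n P_r^{(i)} x‖ ≤ r ^ (1 - n) * ‖D^n P_1^{(i)} (r⁻¹ • x)‖` with `n = |v| ≥ 1` and `r ≥ 1`.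
The single function `P_1^{(i)}` is `C^d`, since the density `s^d (1-s)^d` of `psi` vanishes to
order `d` at `0` and `1`, and it is zero on `‖y‖ ≥ 1`; so its derivatives of order `n ≤ d` are
bounded, and by continuity they vanish on `‖y‖ ≥ 1`.
-/

open Set Filter Topology

lemma hasDerivAt_max_zero_pow (k : ℕ) (u : ℝ) :
    HasDerivAt (fun u : ℝ => max u 0 ^ (k + 2)) ((k + 2) * max u 0 ^ (k + 1)) u := by
  refine hasDerivAt_of_hasDerivAt_of_ne' (f := fun u : ℝ => max u 0 ^ (k + 2))
    (g := fun u : ℝ => (k + 2) * max u 0 ^ (k + 1)) (x := 0) (fun y hy => ?_)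
    (by fun_prop) (by fun_prop) u
  rcases hy.lt_or_gt with hy | hy
  · have h : (fun u : ℝ => max u 0 ^ (k + 2)) =ᶠ[𝓝 y] fun _ => 0 := by
      filter_upwards [eventually_lt_nhds hy] with u hu
      simp [max_eq_right hu.le]
    simpa [max_eq_right hy.le] using (hasDerivAt_const y (0 : ℝ)).congr_of_eventuallyEq h
  · have h : (fun u : ℝ => max u 0 ^ (k + 2)) =ᶠ[𝓝 y] fun u => u ^ (k + 2) := by
      filter_upwards [eventually_gt_nhds hy] with u hu
      rw [max_eq_left hu.le]
    simpa [max_eq_left hy.le] using (hasDerivAt_pow (k + 2) y).congr_of_eventuallyEq h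

lemma contDiff_max_zero_pow (k : ℕ) : ContDiff ℝ k (fun u : ℝ => max u 0 ^ (k + 1)) := by
  induction k with
  | zero => simpa using continuous_id.max continuous_const
  | succ k ih =>
    rw [Nat.cast_succ, contDiff_succ_iff_deriv]
    refine ⟨fun u => (hasDerivAt_max_zero_pow k u).differentiableAt, by simp, ?_⟩
    rw [funext fun u => (hasDerivAt_max_zero_pow k u).deriv]
    exact contDiff_const.mul ih

section

variable {E F : Type*} [NormedAddCommGroup E] [NormedSpace ℝ E]
  [NormedAddCommGroup F] [NormedSpace ℝ F]

lemma iteratedFDeriv_eq_zero_of_le_norm {f : E → F} {n : ℕ} (hf : ContDiff ℝ n f) {R : ℝ}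
    (hR : R ≠ 0) (hf0 : ∀ y, R ≤ ‖y‖ → f y = 0) {x : E} (hx : R ≤ ‖x‖) :
    iteratedFDeriv ℝ n f x = 0 := by
  have hvanish : EqOn (iteratedFDeriv ℝ n f) 0 (Metric.closedBall 0 R)ᶜ := by
    intro y hy
    have hfy : f =ᶠ[𝓝 y] 0 := by
      filter_upwards [Metric.isClosed_closedBall.isOpen_compl.mem_nhds hy] with z hz
      simp only [mem_compl_iff, mem_closedBall_zero_iff, not_le] at hz
      exact hf0 z hz.le
    simpa using (hfy.iteratedFDeriv ℝ n).eq_of_nhds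
  have hx' : x ∈ closure (Metric.closedBall (0 : E) R)ᶜ := by
    rw [closure_compl, interior_closedBall _ hR]
    simpa using hx
  exact hvanish.closure (hf.continuous_iteratedFDeriv le_rfl) continuous_const hx'

lemma exists_norm_iteratedFDeriv_le_indicator [FiniteDimensional ℝ E] {f : E → F} {n : ℕ}
    (hf : ContDiff ℝ n f) {R : ℝ} (hR : R ≠ 0) (hf0 : ∀ y, R ≤ ‖y‖ → f y = 0) :
    ∃ M, ∀ y, ‖iteratedFDeriv ℝ n f y‖ ≤ M * if ‖y‖ < R then 1 else 0 := by
  have hsupp : HasCompactSupport f := .intro (isCompact_closedBall 0 R) fun y hy => by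
    simp only [mem_closedBall_zero_iff, not_le] at hy
    exact hf0 y hy.le
  obtain ⟨M, hM⟩ := (hf.continuous_iteratedFDeriv le_rfl).bounded_above_of_compact_support
    (hsupp.iteratedFDeriv n)
  refine ⟨M, fun y => ?_⟩
  split_ifs with hy
  · simpa using hM y
  · simp [iteratedFDeriv_eq_zero_of_le_norm hf hR hf0 (not_lt.mp hy)]

lemma norm_iteratedFDeriv_dilate_le {f : E → F} {n : ℕ} (hf : ContDiff ℝ n f) (hn : 1 ≤ n)
    {r : ℝ} (hr : 1 ≤ r) (x : E) :
    ‖iteratedFDeriv ℝ n (fun y => r • f (r⁻¹ • y)) x‖ ≤ ‖iteratedFDeriv ℝ n f (r⁻¹ • x)‖ := by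
  have hr0 : 0 < r := one_pos.trans_le hr
  set A : E →L[ℝ] E := r⁻¹ • ContinuousLinearMap.id ℝ E
  have hA : ‖A‖ ≤ r⁻¹ := A.opNorm_le_bound (by positivity) fun y => by
    simp [A, norm_smul, abs_of_pos hr0]
  have hcomp : iteratedFDeriv ℝ n (f ∘ A) x =
      (iteratedFDeriv ℝ n f (A x)).compContinuousLinearMap fun _ => A :=
    A.iteratedFDeriv_comp_right hf x le_rfl
  have hsmul : iteratedFDeriv ℝ n (fun y => r • f (r⁻¹ • y)) x =
      r • iteratedFDeriv ℝ n (f ∘ A) x :=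
    iteratedFDeriv_const_smul_apply' (hf.comp A.contDiff).contDiffAt
  have hrn : r * r⁻¹ ^ n ≤ 1 :=
    calc r * r⁻¹ ^ n ≤ r * r⁻¹ ^ 1 := mul_le_mul_of_nonneg_left
          (pow_le_pow_of_le_one (by positivity) (inv_le_one_of_one_le₀ hr) hn) hr0.le
      _ = 1 := by simp [hr0.ne']
  calc ‖iteratedFDeriv ℝ n (fun y => r • f (r⁻¹ • y)) x‖
      = r * ‖(iteratedFDeriv ℝ n f (A x)).compContinuousLinearMap fun _ => A‖ := by
        rw [hsmul, hcomp, norm_smul, Real.norm_of_nonneg hr0.le]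
    _ ≤ r * (‖iteratedFDeriv ℝ n f (A x)‖ * r⁻¹ ^ n) := by
        gcongr
        refine (ContinuousMultilinearMap.norm_compContinuousLinearMap_le _ _).trans ?_
        rw [Finset.prod_const, Finset.card_univ, Fintype.card_fin]
        gcongr
    _ ≤ ‖iteratedFDeriv ℝ n f (r⁻¹ • x)‖ := by
        rw [mul_left_comm]
        exact mul_le_of_le_one_right (norm_nonneg _) hrn

end

noncomputable def psiDensity (d : ℕ) (s : ℝ) : ℝ := max (s * (1 - s)) 0 ^ d

lemma psiDensity_of_mem_Icc {d : ℕ} {s : ℝ} (hs : s ∈ Icc 0 1) :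
    psiDensity d s = s ^ d * (1 - s) ^ d := by
  rw [psiDensity, max_eq_left (mul_nonneg hs.1 (sub_nonneg.mpr hs.2)), mul_pow]

lemma psiDensity_eq_zero {d : ℕ} (hd : d ≠ 0) {s : ℝ} (hs : s ≤ 0 ∨ 1 ≤ s) :
    psiDensity d s = 0 := by
  have : s * (1 - s) ≤ 0 := by
    rcases hs with hs | hs
    · exact mul_nonpos_of_nonpos_of_nonneg hs (by linarith)
    · exact mul_nonpos_of_nonneg_of_nonpos (by linarith) (by linarith)
  rw [psiDensity, max_eq_right this, zero_pow hd]

lemma continuous_psiDensity (d : ℕ) : Continuous (psiDensity d) := by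
  unfold psiDensity; fun_prop

lemma contDiff_psiDensity (k : ℕ) : ContDiff ℝ k (psiDensity (k + 1)) :=
  (contDiff_max_zero_pow k).comp (contDiff_id.mul (contDiff_const.sub contDiff_id))

/-- `psi d` itself is a polynomial; cutting its density off outside `[0, 1]` gives a `C^d` function
that agrees with it on `[0, 1]` and is constant outside. -/
noncomputable def psiExt (d : ℕ) (t : ℝ) : ℝ :=
  (∫ s in (0:ℝ)..t, psiDensity d s) / ∫ s in (0:ℝ)..1, s ^ d * (1 - s) ^ d

lemma hasDerivAt_psiExt (d : ℕ) (t : ℝ) :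
    HasDerivAt (psiExt d) (psiDensity d t / ∫ s in (0:ℝ)..1, s ^ d * (1 - s) ^ d) t :=
  (continuous_psiDensity d).integral_hasStrictDerivAt 0 t |>.hasDerivAt.div_const _

lemma contDiff_psiExt {d : ℕ} (hd : d ≠ 0) : ContDiff ℝ d (psiExt d) := by
  obtain ⟨k, rfl⟩ := Nat.exists_eq_add_one_of_ne_zero hd
  rw [Nat.cast_succ, contDiff_succ_iff_deriv]
  refine ⟨fun t => (hasDerivAt_psiExt _ t).differentiableAt, by simp, ?_⟩
  rw [show deriv (psiExt (k + 1)) = _ from funext fun t => (hasDerivAt_psiExt (k + 1) t).deriv]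
  exact (contDiff_psiDensity k).div_const _

lemma psiExt_eq_psi {d : ℕ} {t : ℝ} (ht : t ∈ Icc 0 1) : psiExt d t = psi d t := by
  rw [psiExt, psi, intervalIntegral.integral_congr fun s hs => psiDensity_of_mem_Icc ?_]
  rw [uIcc_of_le ht.1] at hs
  exact ⟨hs.1, hs.2.trans ht.2⟩

lemma psiExt_of_nonpos {d : ℕ} (hd : d ≠ 0) {t : ℝ} (ht : t ≤ 0) : psiExt d t = 0 := by
  rw [psiExt, intervalIntegral.integral_congr (g := 0) fun s hs => psiDensity_eq_zero hd ?_]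
  · simp
  rw [uIcc_of_ge ht] at hs
  exact Or.inl hs.2

lemma psi_one (d : ℕ) : psi d 1 = 1 :=
  div_self (intervalIntegral.intervalIntegral_pos_of_pos_on
    (Continuous.intervalIntegrable (by fun_prop) 0 1)
    (fun s hs => mul_pos (pow_pos hs.1 d) (pow_pos (sub_pos.mpr hs.2) d)) one_pos).ne'

lemma psiExt_of_one_le {d : ℕ} (hd : d ≠ 0) {t : ℝ} (ht : 1 ≤ t) : psiExt d t = 1 := by
  have htail : ∫ s in (1:ℝ)..t, psiDensity d s = 0 := by
    rw [intervalIntegral.integral_congr (g := 0) fun s hs => psiDensity_eq_zero hd ?_]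
    · simp
    rw [uIcc_of_le ht] at hs
    exact Or.inr hs.1
  rw [← psi_one d, ← psiExt_eq_psi ⟨zero_le_one, le_rfl⟩, psiExt, psiExt,
    ← intervalIntegral.integral_add_adjacent_intervals
      ((continuous_psiDensity d).intervalIntegrable 0 1)
      ((continuous_psiDensity d).intervalIntegrable 1 t), htail, add_zero]

lemma proj_eq_smul_proj_one {d : ℕ} {δ r : ℝ} (hr : 0 < r) (x : EuclideanSpace ℝ (Fin d)) :
    proj d δ r x = r • proj d δ 1 (r⁻¹ • x) := by
  have hnorm : ‖r⁻¹ • x‖ = ‖x‖ / r := by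
    rw [norm_smul, Real.norm_of_nonneg (inv_nonneg.mpr hr.le), inv_mul_eq_div]
  simp only [proj, hnorm, mul_one, div_le_iff₀ hr, div_lt_one hr]
  split_ifs
  · simp [hr.ne']
  · rw [smul_comm r, smul_inv_smul₀ hr.ne', div_sub' hr.ne', div_div, mul_comm r δ,
      mul_comm r (1 - δ)]
  · simp

lemma proj_one_apply {d : ℕ} (hd : d ≠ 0) {δ : ℝ} (hδ : 0 < δ) (x : EuclideanSpace ℝ (Fin d))
    (i : Fin d) : proj d δ 1 x i = (1 - psiExt d ((‖x‖ - (1 - δ)) / δ)) * x i := by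
  simp only [proj, mul_one]
  split_ifs with h₁ h₂
  · rw [psiExt_of_nonpos hd (div_nonpos_of_nonpos_of_nonneg (by linarith) hδ.le)]
    simp
  · rw [psiExt_eq_psi ⟨div_nonneg (by linarith) hδ.le, (div_le_one hδ).mpr (by linarith)⟩]
    rfl
  · rw [psiExt_of_one_le hd ((one_le_div hδ).mpr (by linarith))]
    simp

lemma proj_one_of_one_le_norm {d : ℕ} {δ : ℝ} (hδ : 0 < δ) {x : EuclideanSpace ℝ (Fin d)}
    (hx : 1 ≤ ‖x‖) : proj d δ 1 x = 0 := by
  rw [proj, if_neg (by linarith), if_neg (not_lt.mpr hx)]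

lemma contDiff_proj_one_apply {d : ℕ} (hd : d ≠ 0) {δ : ℝ} (hδ : 0 < δ) (hδ1 : δ < 1)
    (i : Fin d) : ContDiff ℝ d (fun x => proj d δ 1 x i) := by
  simp only [proj_one_apply hd hδ]
  refine contDiff_iff_contDiffAt.mpr fun x => ?_
  by_cases hx : x = 0
  · subst hx
    refine (EuclideanSpace.proj (𝕜 := ℝ) i).contDiff.contDiffAt.congr_of_eventuallyEq ?_
    filter_upwards [Metric.ball_mem_nhds 0 (sub_pos.mpr hδ1)] with y hy
    rw [mem_ball_zero_iff] at hy
    rw [psiExt_of_nonpos hd (div_nonpos_of_nonpos_of_nonneg (by linarith) hδ.le)]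
    simp
  · exact (contDiffAt_const.sub ((contDiff_psiExt hd).contDiffAt.comp x
      (((contDiffAt_norm ℝ hx).sub contDiffAt_const).div_const δ))).mul
      (EuclideanSpace.proj (𝕜 := ℝ) i).contDiff.contDiffAt

lemma abs_mixedPartial_le {d : ℕ} (f : EuclideanSpace ℝ (Fin d) → ℝ) (v : Finset (Fin d))
    (x : EuclideanSpace ℝ (Fin d)) :
    |mixedPartial d f v x| ≤ ‖iteratedFDeriv ℝ v.card f x‖ := by
  refine ((iteratedFDeriv ℝ v.card f x).le_opNorm _).trans ?_
  simp [PiLp.norm_single]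

theorem mixedPartial_proj_bound (d : ℕ) (hd : 0 < d) (δ : ℝ)
    (hδ1 : 0 < δ) (hδ2 : δ < 1/2) (v : Finset (Fin d)) (hv : v.Nonempty) (i : Fin d) :
    ∃ c : ℝ, ∀ r : ℝ, 1 < (1 - δ) * r →
      ∀ x : EuclideanSpace ℝ (Fin d),
        |mixedPartial d (fun y => proj d δ r y i) v x| ≤
          c * (if ‖x‖ < r then (1 : ℝ) else 0) := by
  have hprofile : ContDiff ℝ v.card (fun y => proj d δ 1 y i) :=
    (contDiff_proj_one_apply hd.ne' hδ1 (by linarith) i).of_le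
      (Nat.cast_le.mpr (by simpa using v.card_le_univ))
  obtain ⟨M, hM⟩ := exists_norm_iteratedFDeriv_le_indicator hprofile one_ne_zero
    fun y hy => by simp [proj_one_of_one_le_norm hδ1 hy]
  refine ⟨M, fun r hr x => ?_⟩
  have hr0 : 0 < r := by nlinarith
  have hr1 : 1 ≤ r := by nlinarith
  have hscale : (fun y => proj d δ r y i) = fun y => r • proj d δ 1 (r⁻¹ • y) i := by
    ext y
    rw [proj_eq_smul_proj_one hr0]
    rfl
  calc |mixedPartial d (fun y => proj d δ r y i) v x|
      ≤ ‖iteratedFDeriv ℝ v.card (fun y => proj d δ r y i) x‖ := abs_mixedPartial_le _ v x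
    _ ≤ ‖iteratedFDeriv ℝ v.card (fun y => proj d δ 1 y i) (r⁻¹ • x)‖ := by
      rw [hscale]
      exact norm_iteratedFDeriv_dilate_le hprofile hv.card_pos hr1 x
    _ ≤ M * if ‖r⁻¹ • x‖ < 1 then 1 else 0 := hM _
    _ = M * if ‖x‖ < r then 1 else 0 := by
      simp only [norm_smul, Real.norm_of_nonneg (inv_nonneg.mpr hr0.le), inv_mul_lt_one₀ hr0]
end

section
/- Suppose f: ℝ^d → ℝ satisfies |D^a f(x)| ≤ C exp(M‖x‖²) for all multi-indices a with |a| ≤ d with growth rate M ≥ 0, and X is an ℝ^d-valued random vector with P(‖X‖ > t) ≤ C' t^η exp(-α t²) for t > t₀, with α > 0. Let p ≥ 1 with M < α/p and let P_r be the radial projection with ‖P_r(x)‖ ≤ ‖x‖, P_r(x) = x on ‖x‖ ≤ (1-δ)r. Then E|f(P_r(X)) - f(X)|^p ≤ C'' r^η exp(-p(α/p - M)(1-δ)² r²) for all sufficiently large r. -/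
/-!
Because `Pr r` fixes the ball of radius `R = (1 - δ) r` and does not increase norms, the integrand
vanishes on `{‖X‖ ≤ R}` and is at most `(2C)^p exp (pM‖X‖²)` elsewhere. Cutting `{‖X‖ > R}` into
the shells `√(R² + k) < ‖X‖ ≤ √(R² + k + 1)`, the weight on the `k`-th shell is at most
`exp (pM (R² + k + 1))` and its mass at most `C' (R² + k)^(η/2) exp (-α (R² + k))`; summing gives
`R^η exp (-(α - pM) R²)` times the convergent series `∑ (k + 1)^m exp (-(α - pM))^k`, `m ≥ |η|`.
-/

open MeasureTheory Real Filter

lemma rpow_sqrt_sq_add_le {R s η : ℝ} {m : ℕ} (hR : 1 ≤ R) (hs : 0 ≤ s) (hm : |η| ≤ m) :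
    √(R ^ 2 + s) ^ η ≤ R ^ η * (s + 1) ^ m := by
  have hR0 : 0 < R := by linarith
  have hs1 : 1 ≤ s + 1 := by linarith
  rcases le_or_gt 0 η with hη | hη
  · have hsqrt : √(R ^ 2 + s) ≤ R * (s + 1) :=
      sqrt_le_iff.mpr ⟨by positivity, by nlinarith [mul_nonneg (sub_nonneg.mpr hR) hs]⟩
    calc √(R ^ 2 + s) ^ η ≤ (R * (s + 1)) ^ η := by gcongr
      _ = R ^ η * (s + 1) ^ η := mul_rpow hR0.le (by linarith)
      _ ≤ R ^ η * (s + 1) ^ (m : ℝ) := by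
        gcongr
        exact (le_abs_self η).trans hm
      _ = R ^ η * (s + 1) ^ m := by rw [rpow_natCast]
  · have hsqrt : R ≤ √(R ^ 2 + s) := (le_sqrt hR0.le (by positivity)).mpr (by linarith)
    calc √(R ^ 2 + s) ^ η ≤ R ^ η := rpow_le_rpow_of_nonpos hR0 hsqrt hη.le
      _ ≤ R ^ η * (s + 1) ^ m := le_mul_of_one_le_right (by positivity) (one_le_pow₀ hs1)

lemma summable_add_one_pow_mul_geometric (m : ℕ) {q : ℝ} (hq0 : 0 < q) (hq1 : q < 1) :
    Summable fun k : ℕ => ((k : ℝ) + 1) ^ m * q ^ k := by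
  have hq : ‖q‖ < 1 := by rwa [norm_of_nonneg hq0.le]
  have h : Summable fun k : ℕ => ((k + 1 : ℕ) : ℝ) ^ m * q ^ (k + 1) :=
    (summable_pow_mul_geometric_of_norm_lt_one m hq).comp_injective (add_left_injective 1)
  refine (h.mul_right q⁻¹).congr fun k => ?_
  rw [pow_succ, Nat.cast_add_one]
  field_simp

lemma exists_lt_le_succ_of_tendsto_atTop {t : ℕ → ℝ} (ht : Tendsto t atTop atTop) {y : ℝ}
    (hy : t 0 < y) : ∃ k, t k < y ∧ y ≤ t (k + 1) := by
  classical
  have hex : ∃ n, y ≤ t n := (ht.eventually_ge_atTop y).exists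
  obtain ⟨k, hk⟩ : ∃ k, Nat.find hex = k + 1 :=
    Nat.exists_eq_succ_of_ne_zero fun h => hy.not_ge (h ▸ Nat.find_spec hex)
  exact ⟨k, lt_of_not_ge (Nat.find_min hex (by omega)), hk ▸ Nat.find_spec hex⟩

lemma setLIntegral_le_tsum_mul_measure_lt {Ω : Type*} [MeasurableSpace Ω] (μ : Measure Ω)
    (Y : Ω → ℝ) (F : Ω → ENNReal) {t : ℕ → ℝ} (ht : Tendsto t atTop atTop) (c : ℕ → ENNReal)
    (hF : ∀ k ω, t k < Y ω → Y ω ≤ t (k + 1) → F ω ≤ c k) :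
    ∫⁻ ω in {ω | t 0 < Y ω}, F ω ∂μ ≤ ∑' k, c k * μ {ω | t k < Y ω} := by
  set A : ℕ → Set Ω := fun k => {ω | t k < Y ω ∧ Y ω ≤ t (k + 1)}
  have hcover : {ω | t 0 < Y ω} ⊆ ⋃ k, A k := fun ω hω =>
    Set.mem_iUnion.mpr (exists_lt_le_succ_of_tendsto_atTop ht hω)
  calc ∫⁻ ω in {ω | t 0 < Y ω}, F ω ∂μ ≤ ∫⁻ ω in ⋃ k, A k, F ω ∂μ := lintegral_mono_set hcover
    _ ≤ ∑' k, ∫⁻ ω in A k, F ω ∂μ := lintegral_iUnion_le A F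
    _ ≤ ∑' k, c k * μ (A k) := ENNReal.tsum_le_tsum fun k =>
      (setLIntegral_mono measurable_const fun ω hω => hF k ω hω.1 hω.2).trans_eq
        (setLIntegral_const _ _)
    _ ≤ ∑' k, c k * μ {ω | t k < Y ω} := ENNReal.tsum_le_tsum fun k => by
      gcongr
      exact fun ω hω => hω.1

lemma exp_mul_sq_tail_term_le {R α β η C' : ℝ} {m : ℕ} (hR : 1 ≤ R) (hm : |η| ≤ m)
    (hC' : 0 ≤ C') (k : ℕ) :
    exp (β * (R ^ 2 + (k + 1))) * (C' * √(R ^ 2 + k) ^ η * exp (-α * √(R ^ 2 + k) ^ 2)) ≤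
      C' * exp β * R ^ η * exp (-(α - β) * R ^ 2) * (((k : ℝ) + 1) ^ m * exp (-(α - β)) ^ k) := by
  have hexp : exp (β * (R ^ 2 + (k + 1))) * exp (-α * (R ^ 2 + k)) =
      exp β * exp (-(α - β) * R ^ 2) * exp (-(α - β)) ^ k := by
    rw [← exp_nat_mul, ← exp_add, ← exp_add, ← exp_add]
    ring_nf
  rw [sq_sqrt (by positivity)]
  calc exp (β * (R ^ 2 + (k + 1))) * (C' * √(R ^ 2 + k) ^ η * exp (-α * (R ^ 2 + k)))
      = C' * exp β * exp (-(α - β) * R ^ 2) * exp (-(α - β)) ^ k * √(R ^ 2 + k) ^ η := by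
        linear_combination (C' * √(R ^ 2 + k) ^ η) * hexp
    _ ≤ C' * exp β * exp (-(α - β) * R ^ 2) * exp (-(α - β)) ^ k *
        (R ^ η * ((k : ℝ) + 1) ^ m) := by
        gcongr
        exact rpow_sqrt_sq_add_le hR k.cast_nonneg hm
    _ = _ := by ring

theorem exists_setLIntegral_exp_mul_sq_le {Ω : Type*} [MeasurableSpace Ω] (μ : Measure Ω)
    (Y : Ω → ℝ) {C' t₀ α η β : ℝ} (hC' : 0 < C') (hβ : 0 ≤ β) (hβα : β < α)
    (htail : ∀ t > t₀, μ {ω | t < Y ω} ≤ ENNReal.ofReal (C' * t ^ η * exp (-α * t ^ 2))) :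
    ∃ K > 0, ∀ R, 1 ≤ R → t₀ < R →
      ∫⁻ ω in {ω | R < Y ω}, ENNReal.ofReal (exp (β * Y ω ^ 2)) ∂μ ≤
        ENNReal.ofReal (K * R ^ η * exp (-(α - β) * R ^ 2)) := by
  set q := exp (-(α - β))
  set m := ⌈|η|⌉₊
  have hsum : Summable fun k : ℕ => ((k : ℝ) + 1) ^ m * q ^ k :=
    summable_add_one_pow_mul_geometric m (exp_pos _) (exp_lt_one_iff.mpr (by linarith))
  have hS : 0 < ∑' k : ℕ, ((k : ℝ) + 1) ^ m * q ^ k :=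
    hsum.tsum_pos (fun k => by positivity) 0 (by simp)
  refine ⟨C' * exp β * ∑' k : ℕ, ((k : ℝ) + 1) ^ m * q ^ k, by positivity,
    fun R hR hRt₀ => ?_⟩
  set t : ℕ → ℝ := fun k => √(R ^ 2 + k)
  have ht : Tendsto t atTop atTop := tendsto_sqrt_atTop.comp
    (tendsto_atTop_add_const_left _ _ tendsto_natCast_atTop_atTop)
  have ht0 : t 0 = R := by simp [t, sqrt_sq (by linarith : 0 ≤ R)]
  have htR : ∀ k, R ≤ t k := fun k =>
    (le_sqrt (by linarith) (by positivity)).mpr (by simp)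
  set B := C' * exp β * R ^ η * exp (-(α - β) * R ^ 2)
  calc ∫⁻ ω in {ω | R < Y ω}, ENNReal.ofReal (exp (β * Y ω ^ 2)) ∂μ
      ≤ ∑' k : ℕ, ENNReal.ofReal (exp (β * (R ^ 2 + (k + 1)))) * μ {ω | t k < Y ω} := by
        refine (le_of_eq (by rw [ht0])).trans
          (setLIntegral_le_tsum_mul_measure_lt μ Y _ ht _ fun k ω hlt hle => ?_)
        have hY : Y ω ^ 2 ≤ R ^ 2 + (k + 1) := by
          have := (le_sqrt' (by linarith [htR k])).mp hle
          push_cast at this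
          linarith
        gcongr
    _ ≤ ∑' k : ℕ, ENNReal.ofReal (B * (((k : ℝ) + 1) ^ m * q ^ k)) := by
        refine ENNReal.tsum_le_tsum fun k => ?_
        calc ENNReal.ofReal (exp (β * (R ^ 2 + (k + 1)))) * μ {ω | t k < Y ω}
            ≤ ENNReal.ofReal (exp (β * (R ^ 2 + (k + 1)))) *
                ENNReal.ofReal (C' * t k ^ η * exp (-α * t k ^ 2)) := by
              gcongr
              exact htail _ (hRt₀.trans_le (htR k))
          _ = ENNReal.ofReal (exp (β * (R ^ 2 + (k + 1))) *
                (C' * t k ^ η * exp (-α * t k ^ 2))) :=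
              (ENNReal.ofReal_mul (exp_pos _).le).symm
          _ ≤ _ := ENNReal.ofReal_le_ofReal
              (exp_mul_sq_tail_term_le hR (Nat.le_ceil _) hC'.le k)
    _ = ENNReal.ofReal (B * ∑' k : ℕ, ((k : ℝ) + 1) ^ m * q ^ k) := by
        rw [← tsum_mul_left, ENNReal.ofReal_tsum_of_nonneg (fun k => by positivity) (hsum.mul_left B)]
    _ = _ := by congr 1; ring

lemma abs_sub_rpow_le_of_norm_le {E : Type*} [SeminormedAddCommGroup E] {f : E → ℝ}
    {C M p : ℝ} (hC : 0 ≤ C) (hM : 0 ≤ M) (hp : 0 ≤ p)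
    (hf : ∀ y, |f y| ≤ C * exp (M * ‖y‖ ^ 2)) {x y : E} (hyx : ‖y‖ ≤ ‖x‖) :
    |f y - f x| ^ p ≤ (2 * C) ^ p * exp (p * M * ‖x‖ ^ 2) := by
  have hfy : |f y| ≤ C * exp (M * ‖x‖ ^ 2) := (hf y).trans (by gcongr)
  calc |f y - f x| ^ p ≤ (2 * C * exp (M * ‖x‖ ^ 2)) ^ p :=
        rpow_le_rpow (abs_nonneg _) (by linarith [abs_sub (f y) (f x), hf x]) hp
    _ = (2 * C) ^ p * exp (p * M * ‖x‖ ^ 2) := by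
        rw [mul_rpow (by positivity) (exp_pos _).le, ← exp_mul]
        ring_nf

lemma lintegral_abs_sub_rpow_le_setLIntegral_exp {E Ω : Type*} [SeminormedAddCommGroup E]
    [MeasurableSpace Ω] (μ : Measure Ω) {f : E → ℝ} {Q : E → E} (X : Ω → E) {C M p R : ℝ}
    (hC : 0 ≤ C) (hM : 0 ≤ M) (hp : 0 < p) (hf : ∀ y, |f y| ≤ C * exp (M * ‖y‖ ^ 2))
    (hQ : ∀ x, ‖Q x‖ ≤ ‖x‖) (hQR : ∀ x, ‖x‖ ≤ R → Q x = x) :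
    ∫⁻ ω, ENNReal.ofReal (|f (Q (X ω)) - f (X ω)| ^ p) ∂μ ≤
      ENNReal.ofReal ((2 * C) ^ p) *
        ∫⁻ ω in {ω | R < ‖X ω‖}, ENNReal.ofReal (exp (p * M * ‖X ω‖ ^ 2)) ∂μ := by
  have hsupp : (fun ω => ENNReal.ofReal (|f (Q (X ω)) - f (X ω)| ^ p)).support ⊆
      {ω | R < ‖X ω‖} := by
    intro ω hω
    by_contra hle
    simp [hQR _ (not_lt.mp hle), zero_rpow hp.ne'] at hω
  rw [← setLIntegral_eq_of_support_subset hsupp, ← lintegral_const_mul' _ _ ENNReal.ofReal_ne_top]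
  refine lintegral_mono fun ω => ?_
  rw [← ENNReal.ofReal_mul (by positivity)]
  exact ENNReal.ofReal_le_ofReal (abs_sub_rpow_le_of_norm_le hC hM hp.le hf (hQ _))

theorem projection_error_moment_bound_general (d : ℕ)
    {Ω : Type*} [MeasurableSpace Ω] (P : Measure Ω)
    (f : EuclideanSpace ℝ (Fin d) → ℝ)
    (C M : ℝ) (hC : 0 < C) (hM0 : 0 ≤ M)
    (hf : ∀ n : ℕ, n ≤ d → ∀ x : EuclideanSpace ℝ (Fin d),
      ‖iteratedFDeriv ℝ n f x‖ ≤ C * Real.exp (M * ‖x‖ ^ 2))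
    (X : Ω → EuclideanSpace ℝ (Fin d))
    (C' t₀ α η : ℝ) (hC' : 0 < C')
    (htail : ∀ t > t₀, P {ω | ‖X ω‖ > t} ≤ ENNReal.ofReal (C' * t ^ η * Real.exp (-α * t ^ 2)))
    (p : ℝ) (hp : 1 ≤ p) (hMα : M < α / p)
    (δ : ℝ) (hδ2 : δ < 1/2)
    (Pr : ℝ → EuclideanSpace ℝ (Fin d) → EuclideanSpace ℝ (Fin d))
    (hPr1 : ∀ r x, ‖Pr r x‖ ≤ ‖x‖)
    (hPr2 : ∀ r x, ‖x‖ ≤ (1 - δ) * r → Pr r x = x) :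
    ∃ C'' > 0, ∃ r₀ : ℝ, ∀ r > r₀,
      ∫⁻ ω, ENNReal.ofReal (|f (Pr r (X ω)) - f (X ω)| ^ p) ∂P ≤
        ENNReal.ofReal
          (C'' * r ^ η * Real.exp (-p * (α / p - M) * (1 - δ) ^ 2 * r ^ 2)) := by
  have hp0 : 0 < p := by linarith
  have hf0 : ∀ y, |f y| ≤ C * exp (M * ‖y‖ ^ 2) := fun y => by
    simpa using hf 0 d.zero_le y
  have hpM : p * M < α := by rwa [lt_div_iff₀' hp0] at hMα
  obtain ⟨K, hK, hK_bound⟩ :=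
    exists_setLIntegral_exp_mul_sq_le P (fun ω => ‖X ω‖) hC' (by positivity) hpM htail
  have h1δ : 0 < 1 - δ := by linarith
  refine ⟨(2 * C) ^ p * K * (1 - δ) ^ η, by positivity, 2 * max 1 t₀, fun r hr => ?_⟩
  have hR : max 1 t₀ < (1 - δ) * r := by nlinarith [le_max_left 1 t₀]
  have hexp : -(α - p * M) * ((1 - δ) * r) ^ 2 = -p * (α / p - M) * (1 - δ) ^ 2 * r ^ 2 := by
    field_simp
  calc ∫⁻ ω, ENNReal.ofReal (|f (Pr r (X ω)) - f (X ω)| ^ p) ∂P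
      ≤ ENNReal.ofReal ((2 * C) ^ p) * ∫⁻ ω in {ω | (1 - δ) * r < ‖X ω‖},
          ENNReal.ofReal (exp (p * M * ‖X ω‖ ^ 2)) ∂P :=
        lintegral_abs_sub_rpow_le_setLIntegral_exp P X hC.le hM0 hp0 hf0 (hPr1 r) (hPr2 r)
    _ ≤ ENNReal.ofReal ((2 * C) ^ p) *
          ENNReal.ofReal (K * ((1 - δ) * r) ^ η * exp (-(α - p * M) * ((1 - δ) * r) ^ 2)) := by
        gcongr
        exact hK_bound _ ((le_max_left _ _).trans hR.le) ((le_max_right _ _).trans_lt hR)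
    _ = _ := by
        rw [← ENNReal.ofReal_mul (by positivity), hexp,
          mul_rpow h1δ.le (by linarith [le_max_left 1 t₀])]
        ring_nf

theorem projection_error_moment_bound (d : ℕ) (hd : 0 < d)
    {Ω : Type*} [MeasurableSpace Ω] (P : Measure Ω) [IsProbabilityMeasure P]
    (f : EuclideanSpace ℝ (Fin d) → ℝ)
    (C M : ℝ) (hC : 0 < C) (hM0 : 0 ≤ M)
    (hf : ∀ n : ℕ, n ≤ d → ∀ x : EuclideanSpace ℝ (Fin d),
      ‖iteratedFDeriv ℝ n f x‖ ≤ C * Real.exp (M * ‖x‖ ^ 2))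
    (X : Ω → EuclideanSpace ℝ (Fin d)) (hX : Measurable X)
    (C' t₀ α η : ℝ) (hC' : 0 < C') (ht₀ : 0 < t₀) (hα : 0 < α)
    (htail : ∀ t > t₀, P {ω | ‖X ω‖ > t} ≤ ENNReal.ofReal (C' * t ^ η * Real.exp (-α * t ^ 2)))
    (p : ℝ) (hp : 1 ≤ p) (hMα : M < α / p)
    (δ : ℝ) (hδ1 : 0 < δ) (hδ2 : δ < 1/2)
    (Pr : ℝ → EuclideanSpace ℝ (Fin d) → EuclideanSpace ℝ (Fin d))
    (hPr1 : ∀ r x, ‖Pr r x‖ ≤ ‖x‖)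
    (hPr2 : ∀ r x, ‖x‖ ≤ (1 - δ) * r → Pr r x = x) :
    ∃ C'' > 0, ∃ r₀ : ℝ, ∀ r > r₀,
      ∫⁻ ω, ENNReal.ofReal (|f (Pr r (X ω)) - f (X ω)| ^ p) ∂P ≤
        ENNReal.ofReal
          (C'' * r ^ η * Real.exp (-p * (α / p - M) * (1 - δ) ^ 2 * r ^ 2)) :=
  projection_error_moment_bound_general d P f C M hC hM0 hf X C' t₀ α η hC' htail p hp hMα δ hδ2 Pr
    hPr1 hPr2
end
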